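/- Let G* be a CPDAG, X, Y distinct non-adjacent vertices with X not an explicit cause of Y, and assume the critical set C of X with respect to Y is contained in some maximal clique M of the induced subgraph over sib(X,G*). Then in the DAG G ∈ [G*] with pa(X,G) = pa(X,G*) ∪ M, every path from X to Y in G is blocked by pa(X,G*) ∪ M (i.e., X ⊥ Y | pa(X,G*) ∪ M in G). -/

import Mathlib

variable {V : Type*}

/-- A partially directed graph, with directed edges `dir` and undirected edges
`undir`; between two vertices there is at most one edge. -/
structure PDGraph (V : Type*) where
  dir : V → V → Prop
  undir : V → V → Prop
  undir_symm : ∀ {a b}, undir a b → undir b a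
  dir_irrefl : ∀ a, ¬ dir a a
  undir_irrefl : ∀ a, ¬ undir a a
  not_double : ∀ a b, dir a b → ¬ dir b a
  not_mixed : ∀ a b, dir a b → ¬ undir a b

namespace PDGraph

variable (G : PDGraph V)

/-- Two vertices are adjacent if joined by some edge. -/
def adj (a b : V) : Prop := G.dir a b ∨ G.dir b a ∨ G.undir a b

/-- Parents of `x`: vertices with a directed edge into `x`. -/
def pa (x : V) : Set V := {a | G.dir a x}

/-- Children of `x`: vertices with a directed edge from `x`. -/
def ch (x : V) : Set V := {b | G.dir x b}

/-- Siblings (undirected neighbours) of `x`. -/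
def sib (x : V) : Set V := {a | G.undir a x}

end PDGraph

/-- A directed-edge relation is a DAG if it has no directed cycle. -/
def IsDAG (E : V → V → Prop) : Prop := ∀ a, ¬ Relation.TransGen E a a

/-- A v-structure `a → b ← c` in a directed graph, with `a` and `c` non-adjacent. -/
def VStruct (E : V → V → Prop) (a b c : V) : Prop :=
  E a b ∧ E c b ∧ a ≠ c ∧ ¬ E a c ∧ ¬ E c a

/-- The DAG `E` belongs to the Markov equivalence class represented by the
partially directed graph `G`: it is obtained by orienting the undirected edges
of `G` acyclically without creating any new v-structure. -/
def InClass (G : PDGraph V) (E : V → V → Prop) : Prop :=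
  IsDAG E ∧
  (∀ a b, G.dir a b → E a b) ∧
  (∀ a b, G.undir a b → E a b ∨ E b a) ∧
  (∀ a b, E a b → G.adj a b) ∧
  (∀ a b c, VStruct E a b c → G.dir a b ∧ G.dir c b)

/-- `G` is a CPDAG: its class is nonempty, and every undirected edge of `G` is
oriented in both ways among the DAGs of the class (so an edge of `G` is
directed iff it is directed the same way in every DAG of the class). -/
def IsCPDAG (G : PDGraph V) : Prop :=
  (∃ E, InClass G E) ∧ ∀ a b, G.undir a b → ∃ E, InClass G E ∧ E a b

/-- A single step of a partially directed path away from the start. -/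
def PDStep (G : PDGraph V) (a b : V) : Prop := G.dir a b ∨ G.undir a b

/-- `p` is a partially directed path from `x` to `y` in `G`: distinct vertices,
no edge on it points back toward `x`. -/
def IsPDPath (G : PDGraph V) (x y : V) (p : List V) : Prop :=
  p.Nodup ∧ p.Chain' (PDStep G) ∧ p.head? = some x ∧ p.getLast? = some y

/-- A path is chordless in `G` if no two nonconsecutive vertices on it are adjacent. -/
def ChordlessIn (G : PDGraph V) (p : List V) : Prop :=
  ∀ (i j : ℕ) (hi : i < p.length) (hj : j < p.length),
    i + 1 < j → ¬ G.adj (p.get ⟨i, hi⟩) (p.get ⟨j, hj⟩)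

/-- The critical set of `x` with respect to `y`: the vertices adjacent to `x`
lying on (i.e. directly following `x` on) some chordless partially directed
path from `x` to `y`. -/
def criticalSet (G : PDGraph V) (x y : V) : Set V :=
  {c | ∃ p, IsPDPath G x y p ∧ ChordlessIn G p ∧ p[1]? = some c}

/-- One step along a path in the skeleton of the directed graph `E`. -/
def SkelStep (E : V → V → Prop) (a b : V) : Prop := E a b ∨ E b a

/-- The middle vertex `b` of a consecutive triple on a path is active given `Z`:
if it is a collider then it has a descendant in `Z`, otherwise it is not in `Z`. -/
def ActiveTriple (E : V → V → Prop) (Z : Set V) (a b c : V) : Prop :=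
  (E a b ∧ E c b → ∃ d ∈ Z, Relation.ReflTransGen E b d) ∧
  (¬ (E a b ∧ E c b) → b ∉ Z)

/-- `x` and `y` are d-connected given `Z` in the DAG `E`: neither endpoint is in
`Z` and there is a path between them on which every intermediate vertex is active. -/
def DConn (E : V → V → Prop) (Z : Set V) (x y : V) : Prop :=
  x ∉ Z ∧ y ∉ Z ∧ ∃ p : List V, p.Nodup ∧ p.Chain' (SkelStep E) ∧
    p.head? = some x ∧ p.getLast? = some y ∧
    ∀ (i : ℕ) (h : i + 2 < p.length),
      ActiveTriple E Z (p.get ⟨i, by omega⟩) (p.get ⟨i + 1, by omega⟩) (p.get ⟨i + 2, h⟩)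

/-- d-separation: `x ⟂ y | Z` in the DAG `E`. -/
def DSep (E : V → V → Prop) (Z : Set V) (x y : V) : Prop := ¬ DConn E Z x y

/-- `x` is an explicit cause of `y`: `G` itself has a directed path from `x` to `y`. -/
def ExplicitCause (G : PDGraph V) (x y : V) : Prop := Relation.TransGen G.dir x y

/-- `x` is a definite cause of `y`: every DAG in the class has a directed path
from `x` to `y`. -/
def DefiniteCause (G : PDGraph V) (x y : V) : Prop :=
  ∀ E, InClass G E → Relation.TransGen E x y

/-- `x` is a definite non-cause of `y`: no DAG in the class has a directed path
from `x` to `y`. -/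
def DefiniteNonCause (G : PDGraph V) (x y : V) : Prop :=
  ∀ E, InClass G E → ¬ Relation.TransGen E x y

/-- `x` is a possible cause of `y`: it is an ancestor of `y` in some but not
all DAGs of the class. -/
def PossibleCause (G : PDGraph V) (x y : V) : Prop :=
  (∃ E, InClass G E ∧ Relation.TransGen E x y) ∧
  (∃ E, InClass G E ∧ ¬ Relation.TransGen E x y)

/-- `x` is an implicit cause of `y`: a definite cause that is not explicit. -/
def ImplicitCause (G : PDGraph V) (x y : V) : Prop :=
  DefiniteCause G x y ∧ ¬ ExplicitCause G x y

/-- `x` and `y` lie in the same chain component of `G`: they are connected by a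
purely undirected path. -/
def SameChainComp (G : PDGraph V) (x y : V) : Prop := Relation.ReflTransGen G.undir x y

/-- A set of vertices pairwise joined by undirected edges. -/
def UClique (G : PDGraph V) (S : Set V) : Prop :=
  ∀ a ∈ S, ∀ b ∈ S, a ≠ b → G.undir a b

/-- `M` is a maximal clique of the induced subgraph of `G` over the siblings of `x`. -/
def MaxCliqueInSib (G : PDGraph V) (x : V) (M : Set V) : Prop :=
  M ⊆ G.sib x ∧ UClique G M ∧
    ∀ M', M' ⊆ G.sib x → UClique G M' → M ⊆ M' → M' = M

/-- `S` induces a complete subgraph of `G`: all its vertices pairwise adjacent. -/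
def CompleteIn (G : PDGraph V) (S : Set V) : Prop :=
  ∀ a ∈ S, ∀ b ∈ S, a ≠ b → G.adj a b

/-!
Let `Z = pa(x, G*) ∪ M`, the parents of `x` in the DAG `E`. A path from `x` that is d-connecting
given `Z` cannot start with an edge `v → x` (then `v ∈ Z` would be a blocked non-collider, or
`v = y ∈ Z`), and it can never turn back: a collider on it would have a descendant in `Z`, i.e. a
parent of `x`, closing a directed cycle through `x`. Hence `x` is an ancestor of `y` in `E`.
A shortest directed path from `x` to `y` in `E` is chordless and partially directed in `G*`, so its
second vertex lies in the critical set, hence in `M ⊆ Z`: again a cycle through `x`.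
-/

open Relation

namespace List

variable {α : Type*} {R : α → α → Prop} {l : List α}

theorem head?_take_succ_append_drop (i j : ℕ) : (l.take (i + 1) ++ l.drop j).head? = l.head? := by
  cases l <;> simp

theorem getLast?_take_append_drop {i j : ℕ} (hj : j < l.length) :
    (l.take i ++ l.drop j).getLast? = l.getLast? := by
  have : l.getLast?.isSome := by simp [getLast?_eq_getElem?]; omega
  rw [getLast?_append, getLast?_drop, if_neg (by omega), Option.or_of_isSome this]

theorem IsChain.take_succ_append_drop {i j : ℕ} (hl : l.IsChain R) (hij : i < j)
    (hj : j < l.length) (hR : R l[i] l[j]) : (l.take (i + 1) ++ l.drop j).IsChain R := by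
  refine (hl.take _).append (hl.drop _) fun a ha b hb => ?_
  rw [getLast?_take, if_neg (by omega), getElem?_eq_getElem (by omega)] at ha
  rw [head?_drop, getElem?_eq_getElem hj] at hb
  simp_all

end List

section Chains

variable {α : Type*}

def IsChainFromTo (R : α → α → Prop) (x y : α) (l : List α) : Prop :=
  l.IsChain R ∧ l.head? = some x ∧ l.getLast? = some y

variable {R : α → α → Prop} {x y : α} {l : List α}

theorem IsChainFromTo.getElem_zero (hl : IsChainFromTo R x y l)
    (h : 0 < l.length) : l[0] = x := by
  simpa [List.head?_eq_getElem?, List.getElem?_eq_getElem h] using hl.2.1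

theorem IsChainFromTo.getElem_of_add_one_eq_length (hl : IsChainFromTo R x y l)
    {i : ℕ} (hi : i + 1 = l.length) : l[i] = y := by
  obtain rfl : i = l.length - 1 := by omega
  simpa [List.getLast?_eq_getElem?, List.getElem?_eq_getElem (by omega : l.length - 1 < l.length)]
    using hl.2.2

theorem IsChainFromTo.one_lt_length (hl : IsChainFromTo R x y l) (hxy : x ≠ y) :
    1 < l.length := by
  obtain ⟨-, hx, hy⟩ := hl
  match l, hx, hy with
  | [a], hx, hy => simp_all
  | _ :: _ :: _, _, _ => simp

theorem exists_isChainFromTo_of_transGen (h : TransGen R x y) : ∃ l, IsChainFromTo R x y l := by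
  obtain ⟨l, hl, hlast⟩ := List.exists_isChain_cons_of_relationReflTransGen h.to_reflTransGen
  exact ⟨x :: l, hl, rfl, by rw [List.getLast?_eq_some_getLast (List.cons_ne_nil _ _), hlast]⟩

theorem exists_isChainFromTo_forall_not_rel (h : TransGen R x y) :
    ∃ l, IsChainFromTo R x y l ∧
      ∀ i j (hij : i + 1 < j) (hj : j < l.length), ¬ R l[i] l[j] := by
  -- a shortest chain: a forward chord would shortcut it
  obtain ⟨l, hl, hmin⟩ := (measure List.length).wf.has_min {l | IsChainFromTo R x y l}
    (exists_isChainFromTo_of_transGen h)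
  refine ⟨l, hl, fun i j hij hj hR => hmin _ ⟨hl.1.take_succ_append_drop (by omega) hj hR,
    ?_, ?_⟩ ?_⟩
  · rw [List.head?_take_succ_append_drop, hl.2.1]
  · rw [List.getLast?_take_append_drop hj, hl.2.2]
  · show List.length _ < l.length
    simp only [List.length_append, List.length_take, List.length_drop]
    omega

end Chains

section Graphs

variable {E : V → V → Prop} {x y : V}

theorem IsDAG.exists_chordless_chain (hE : IsDAG E) (h : TransGen E x y) :
    ∃ l, IsChainFromTo E x y l ∧ l.Nodup ∧
      ∀ i j (hij : i + 1 < j) (hj : j < l.length), ¬ E l[i] l[j] ∧ ¬ E l[j] l[i] := by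
  obtain ⟨l, hl, hfwd⟩ := exists_isChainFromTo_forall_not_rel h
  have hpw : l.Pairwise (TransGen E) := (hl.1.imp fun _ _ => TransGen.single).pairwise
  have hnd : l.Nodup := hpw.imp fun {a _} hab => by rintro rfl; exact hE a hab
  refine ⟨l, hl, hnd, fun i j hij hj => ⟨hfwd i j hij hj, ?_⟩⟩
  exact fun hback =>
    hE _ ((List.pairwise_iff_getElem.mp hpw i j (by omega) hj (by omega)).tail hback)

variable {G : PDGraph V}

theorem InClass.pdStep (hE : InClass G E) {a b : V} (hab : E a b) : PDStep G a b := by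
  rcases hE.2.2.2.1 a b hab with h | h | h
  · exact Or.inl h
  · exact (hE.1 a (.tail (.single hab) (hE.2.1 b a h))).elim
  · exact Or.inr h

theorem InClass.rel_or_rel_of_adj (hE : InClass G E) {a b : V} (hab : G.adj a b) :
    E a b ∨ E b a := by
  rcases hab with h | h | h
  · exact Or.inl (hE.2.1 a b h)
  · exact Or.inr (hE.2.1 b a h)
  · exact hE.2.2.1 a b h

theorem InClass.exists_mem_criticalSet (hE : InClass G E) (h : TransGen E x y) :
    ∃ c ∈ criticalSet G x y, E x c := by
  obtain ⟨l, hl, hnd, hchord⟩ := hE.1.exists_chordless_chain h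
  have h1 : 1 < l.length := hl.one_lt_length fun hxy => hE.1 x (hxy ▸ h)
  have hchordless : ChordlessIn G l := fun i j _ hj hij hadj =>
    (hE.rel_or_rel_of_adj hadj).elim (hchord i j hij hj).1 (hchord i j hij hj).2
  refine ⟨l[1], ⟨l, ⟨hnd, hl.1.imp fun _ _ => hE.pdStep, hl.2⟩, hchordless,
    List.getElem?_eq_getElem h1⟩, ?_⟩
  simpa only [hl.getElem_zero] using List.isChain_iff_getElem.mp hl.1 0 h1

theorem DConn.transGen_of_parents (hE : IsDAG E) (hxy : x ≠ y)
    (h : DConn E {a | E a x} x y) : TransGen E x y := by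
  obtain ⟨-, hy, p, -, hch, hx, hyl, hact⟩ := h
  have hp : IsChainFromTo (SkelStep E) x y p := ⟨hch, hx, hyl⟩
  have h1 := hp.one_lt_length hxy
  have hstep := List.isChain_iff_getElem.mp hp.1
  simp only [List.get_eq_getElem] at hact
  have hforward : ∀ i (hi : i + 1 < p.length), E p[i] p[i + 1] ∧ TransGen E x p[i + 1] := by
    intro i
    induction i with
    | zero =>
      intro hi
      have hx0 := hp.getElem_zero (by omega)
      rcases hstep 0 hi with hf | hb
      · rw [hx0] at hf ⊢
        exact ⟨hf, .single hf⟩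
      · rw [hx0] at hb
        exfalso
        rcases Nat.lt_or_ge 2 p.length with h2 | h2
        · exact (hact 0 h2).2 (fun hcol => hE x (.tail (.single (hx0 ▸ hcol.1)) hb)) hb
        · rw [hp.getElem_of_add_one_eq_length (by omega)] at hb
          exact hy hb
    | succ i ih =>
      intro hi
      obtain ⟨hi', hxi⟩ := ih (by omega)
      rcases hstep (i + 1) hi with hf | hb
      · exact ⟨hf, hxi.tail hf⟩
      · obtain ⟨d, hd, hpd⟩ := (hact i hi).1 ⟨hi', hb⟩
        exact (hE x (hxi.trans (.tail' hpd hd))).elim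
  simpa only [hp.getElem_of_add_one_eq_length (by omega : p.length - 2 + 1 + 1 = p.length)]
    using (hforward (p.length - 2) (by omega)).2

end Graphs

theorem stmt18_general (G : PDGraph V) (x y : V) (hxy : x ≠ y)
    (M : Set V) (hC : criticalSet G x y ⊆ M)
    (E : V → V → Prop) (hE : InClass G E) (hpa : {a | E a x} = G.pa x ∪ M) :
    DSep E (G.pa x ∪ M) x y := by
  rw [← hpa]
  intro hconn
  obtain ⟨c, hc, hxc⟩ := hE.exists_mem_criticalSet (hconn.transGen_of_parents hE.1 hxy)
  have hcx : c ∈ {a | E a x} := by rw [hpa]; exact Or.inr (hC hc)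
  exact hE.1 x (.tail (.single hxc) hcx)

/-- If `x` and `y` are non-adjacent, `x` is not an explicit cause of `y`, and
the critical set of `x` w.r.t. `y` is contained in a maximal clique `M` of the
induced subgraph over `sib(x)`, then in the DAG of the class with
`pa(x) = pa(x,G*) ∪ M` we have `x ⟂ y | pa(x,G*) ∪ M`. -/
theorem stmt18 (G : PDGraph V) (hG : IsCPDAG G) (x y : V) (hxy : x ≠ y)
    (hnadj : ¬ G.adj x y) (hnexp : ¬ ExplicitCause G x y)
    (M : Set V) (hM : MaxCliqueInSib G x M) (hC : criticalSet G x y ⊆ M)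
    (E : V → V → Prop) (hE : InClass G E) (hpa : {a | E a x} = G.pa x ∪ M) :
    DSep E (G.pa x ∪ M) x y :=
  stmt18_general G x y hxy M hC E hE hpa
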